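/- arXiv:1102.1378 — 6 statements merged into one kernel-verified Lean document; each statement's English description precedes it below -/
import Mathlib

section
/- Let H be a real Hilbert space with dim H ≥ 2 and let φ : H → ℝ be a function such that for every nonempty closed convex set C ⊆ H, the infimum of φ over C is attained at the projection of 0 onto C. Then φ is radially increasing: for all x, y ∈ H, if ‖x‖ < ‖y‖ then φ(x) ≤ φ(y). -/
/-- `p` is the metric projection of `x` onto `C`. -/
def IsProj {E : Type*} [NormedAddCommGroup E] (C : Set E) (x p : E) : Prop :=
  p ∈ C ∧ ∀ y ∈ C, ‖x - p‖ ≤ ‖x - y‖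

/-!
If `‖p‖² ≤ ⟪p, q⟫`, then `q` lies in the closed half-space `{z | ‖p‖² ≤ ⟪p, z⟫}`, whose point
nearest to `0` is `p`; so the hypothesis gives `φ p ≤ φ q`. In a plane through `0` such a step
can turn `p` by any angle `θ` with `cos θ ≠ 0` while multiplying its norm by `1 / cos θ`.
Turning `x` onto the ray of `y` in `n` equal steps multiplies the norm by `1 / cos (Θ / n) ^ n`,
which tends to `1`, so for large `n` it stays below `‖y‖ / ‖x‖`, and a final radial step reaches
`y`. When `x` and `y` are collinear, the plane is spanned by `x` and any vector orthogonal to it.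
-/

open Real Relation RealInnerProductSpace Filter Topology

theorem one_sub_sq_div_le_cos_div_pow (Θ : ℝ) {n : ℕ} (hn : 0 < n) (hΘ : Θ ^ 2 / 2 ≤ n) :
    1 - Θ ^ 2 / 2 / n ≤ cos (Θ / n) ^ n := by
  have hn' : (1 : ℝ) ≤ n := by exact_mod_cast hn
  have hsmall : (Θ / n) ^ 2 / 2 ≤ 1 := by
    rw [div_pow, div_div, div_le_one (by positivity)]
    nlinarith [mul_le_mul_of_nonneg_left hn' (by positivity : (0 : ℝ) ≤ n)]
  calc 1 - Θ ^ 2 / 2 / n = 1 + n * -((Θ / n) ^ 2 / 2) := by field_simp; ring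
    _ ≤ (1 + -((Θ / n) ^ 2 / 2)) ^ n := one_add_mul_le_pow (by linarith) n
    _ ≤ cos (Θ / n) ^ n := by
        rw [← sub_eq_add_neg]
        exact pow_le_pow_left₀ (by linarith) one_sub_sq_div_two_le_cos n

theorem tendsto_cos_div_pow_atTop (Θ : ℝ) :
    Tendsto (fun n : ℕ => cos (Θ / n) ^ n) atTop (𝓝 1) := by
  have hlower : Tendsto (fun n : ℕ => 1 - Θ ^ 2 / 2 / n) atTop (𝓝 1) := by
    simpa using (tendsto_const_nhds (x := (1 : ℝ))).sub
      (tendsto_const_div_atTop_nhds_zero_nat (Θ ^ 2 / 2))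
  refine tendsto_of_tendsto_of_tendsto_of_le_of_le' hlower tendsto_const_nhds ?_ ?_
  · filter_upwards [eventually_gt_atTop 0, eventually_ge_atTop ⌈Θ ^ 2 / 2⌉₊] with n hn hΘ
    exact one_sub_sq_div_le_cos_div_pow Θ hn (Nat.ceil_le.mp hΘ)
  · refine Eventually.of_forall fun n => ?_
    calc cos (Θ / n) ^ n ≤ |cos (Θ / n)| ^ n := by rw [← abs_pow]; exact le_abs_self _
      _ ≤ 1 := pow_le_one₀ (abs_nonneg _) (abs_cos_le_one _)

section

variable {H : Type*} [NormedAddCommGroup H] [InnerProductSpace ℝ H]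

def HalfspaceStep (p q : H) : Prop :=
  ‖p‖ ^ 2 ≤ ⟪p, q⟫

theorem isProj_zero_halfspace (p : H) : IsProj {z | ‖p‖ ^ 2 ≤ ⟪p, z⟫} 0 p := by
  refine ⟨by simp, fun z (hz : ‖p‖ ^ 2 ≤ ⟪p, z⟫) => ?_⟩
  have := real_inner_le_norm p z
  simp only [zero_sub, norm_neg]
  nlinarith [norm_nonneg p, norm_nonneg z]

theorem le_of_reflTransGen_halfspaceStep {φ : H → ℝ}
    (hφ : ∀ C : Set H, C.Nonempty → IsClosed C → Convex ℝ C →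
      ∀ p, IsProj C 0 p → ∀ y ∈ C, φ p ≤ φ y)
    {x y : H} (h : ReflTransGen HalfspaceStep x y) : φ x ≤ φ y := by
  have hstep (p q : H) (hpq : HalfspaceStep p q) : φ p ≤ φ q :=
    hφ _ ⟨p, (isProj_zero_halfspace p).1⟩
      (isClosed_le continuous_const (continuous_const.inner continuous_id))
      (convex_halfSpace_ge (innerₛₗ ℝ p).isLinear _) p (isProj_zero_halfspace p) q hpq
  simpa [reflTransGen_eq_self] using h.lift φ hstep

theorem halfspaceStep_smul_self {t : ℝ} (ht : 1 ≤ t) (p : H) : HalfspaceStep p (t • p) := by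
  unfold HalfspaceStep
  rw [real_inner_smul_right, real_inner_self_eq_norm_sq]
  nlinarith [sq_nonneg ‖p‖]

noncomputable def arcPoint (u w : H) (t : ℝ) : H :=
  cos t • u + sin t • w

theorem inner_arcPoint {u w : H} (hu : ‖u‖ = 1) (hw : ‖w‖ = 1) (huw : ⟪u, w⟫ = 0) (s t : ℝ) :
    ⟪arcPoint u w s, arcPoint u w t⟫ = cos (s - t) := by
  have hwu : ⟪w, u⟫ = 0 := by rw [real_inner_comm, huw]
  simp only [arcPoint, inner_add_left, inner_add_right, real_inner_smul_left,
    real_inner_smul_right, real_inner_self_eq_norm_sq, hu, hw, huw, hwu, cos_sub]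
  ring

theorem halfspaceStep_arcPoint {u w : H} (hu : ‖u‖ = 1) (hw : ‖w‖ = 1) (huw : ⟪u, w⟫ = 0)
    {θ : ℝ} (hθ : cos θ ≠ 0) (r s : ℝ) :
    HalfspaceStep (r • arcPoint u w s) ((r / cos θ) • arcPoint u w (s + θ)) := by
  unfold HalfspaceStep
  rw [← real_inner_self_eq_norm_sq, real_inner_smul_left, real_inner_smul_right,
    real_inner_smul_left, real_inner_smul_right, inner_arcPoint hu hw huw,
    inner_arcPoint hu hw huw, sub_self, cos_zero, sub_add_cancel_left, cos_neg,
    div_mul_cancel₀ _ hθ, mul_one]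

theorem reflTransGen_halfspaceStep_arcPoint {u w : H} (hu : ‖u‖ = 1) (hw : ‖w‖ = 1)
    (huw : ⟪u, w⟫ = 0) {θ : ℝ} (hθ : cos θ ≠ 0) (r s : ℝ) (n : ℕ) :
    ReflTransGen HalfspaceStep (r • arcPoint u w s)
      ((r / cos θ ^ n) • arcPoint u w (s + n * θ)) := by
  induction n with
  | zero =>
    simp only [pow_zero, div_one, Nat.cast_zero, zero_mul, add_zero]
    exact .refl
  | succ n ih =>
    refine ih.tail ?_
    convert halfspaceStep_arcPoint hu hw huw hθ (r / cos θ ^ n) (s + n * θ) using 2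
    · rw [pow_succ, div_div]
    · rw [Nat.cast_succ, add_one_mul, add_assoc]

theorem exists_eq_norm_smul_arcPoint {u w : H} (hu : ‖u‖ = 1) (hw : ‖w‖ = 1) (huw : ⟪u, w⟫ = 0)
    (c s : ℝ) : ∃ Θ, c • u + s • w = ‖c • u + s • w‖ • arcPoint u w Θ := by
  set z : ℂ := ⟨c, s⟩
  have hnorm : ‖c • u + s • w‖ = ‖z‖ := by
    have horth : ⟪c • u, s • w⟫ = 0 := by
      rw [real_inner_smul_left, real_inner_smul_right, huw, mul_zero, mul_zero]
    rw [← sq_eq_sq₀ (norm_nonneg _) (norm_nonneg _), Complex.sq_norm, Complex.normSq_apply, sq,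
      norm_add_sq_eq_norm_sq_add_norm_sq_real horth, norm_smul, norm_smul, hu, hw]
    simp [z]
  refine ⟨z.arg, ?_⟩
  rw [hnorm, arcPoint, smul_add, smul_smul, smul_smul, Complex.norm_mul_cos_arg,
    Complex.norm_mul_sin_arg]

theorem exists_norm_eq_one_inner_eq_zero (hdim : 2 ≤ Module.rank ℝ H) (u : H) :
    ∃ w : H, ‖w‖ = 1 ∧ ⟪u, w⟫ = 0 := by
  have hspan : (ℝ ∙ u) ≠ ⊤ := by
    intro htop
    have h1 : Module.rank ℝ (ℝ ∙ u) ≤ 1 := by simpa using rank_span_le (R := ℝ) {u}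
    rw [htop, rank_top] at h1
    exact absurd (hdim.trans h1) (by norm_num)
  obtain ⟨v, hv, hv0⟩ := (Submodule.ne_bot_iff _).mp
    (mt Submodule.orthogonal_eq_bot_iff.mp hspan)
  refine ⟨‖v‖⁻¹ • v, norm_smul_inv_norm hv0, ?_⟩
  rw [real_inner_smul_right, Submodule.mem_orthogonal_singleton_iff_inner_right.mp hv, mul_zero]

theorem exists_orthonormal_eq_smul_add_smul (hdim : 2 ≤ Module.rank ℝ H) {u : H} (hu : ‖u‖ = 1)
    (y : H) : ∃ w : H, ‖w‖ = 1 ∧ ⟪u, w⟫ = 0 ∧ ∃ s : ℝ, y = ⟪u, y⟫ • u + s • w := by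
  set v := y - ⟪u, y⟫ • u with hv
  have huv : ⟪u, v⟫ = 0 := by
    rw [hv, inner_sub_right, real_inner_smul_right, real_inner_self_eq_norm_sq, hu]
    ring
  rcases eq_or_ne v 0 with hv0 | hv0
  · obtain ⟨w, hw, huw⟩ := exists_norm_eq_one_inner_eq_zero hdim u
    exact ⟨w, hw, huw, 0, by rw [zero_smul, add_zero, ← sub_eq_zero, ← hv, hv0]⟩
  · refine ⟨‖v‖⁻¹ • v, norm_smul_inv_norm hv0, ?_, ‖v‖, ?_⟩
    · rw [real_inner_smul_right, huv, mul_zero]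
    · rw [smul_inv_smul₀ (norm_ne_zero_iff.mpr hv0), hv, add_sub_cancel]

theorem exists_arcPoint_repr (hdim : 2 ≤ Module.rank ℝ H) {x : H} (hx : x ≠ 0) (y : H) :
    ∃ u w : H, ‖u‖ = 1 ∧ ‖w‖ = 1 ∧ ⟪u, w⟫ = 0 ∧
      ∃ Θ, x = ‖x‖ • arcPoint u w 0 ∧ y = ‖y‖ • arcPoint u w Θ := by
  set u := ‖x‖⁻¹ • x
  have hu : ‖u‖ = 1 := norm_smul_inv_norm hx
  obtain ⟨w, hw, huw, s, hy⟩ := exists_orthonormal_eq_smul_add_smul hdim hu y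
  obtain ⟨Θ, hΘ⟩ := exists_eq_norm_smul_arcPoint hu hw huw ⟪u, y⟫ s
  refine ⟨u, w, hu, hw, huw, Θ, ?_, ?_⟩
  · simp [arcPoint, u, smul_inv_smul₀ (norm_ne_zero_iff.mpr hx)]
  · rwa [← hy] at hΘ

theorem reflTransGen_halfspaceStep_of_norm_lt (hdim : 2 ≤ Module.rank ℝ H) {x y : H}
    (hxy : ‖x‖ < ‖y‖) : ReflTransGen HalfspaceStep x y := by
  rcases eq_or_ne x 0 with rfl | hx
  · exact .single (by simp [HalfspaceStep])
  obtain ⟨u, w, hu, hw, huw, Θ, hxu, hyw⟩ := exists_arcPoint_repr hdim hx y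
  have ha : 0 < ‖x‖ := norm_pos_iff.mpr hx
  have hb : 0 < ‖y‖ := ha.trans hxy
  obtain ⟨n, hcos, hn⟩ := (((tendsto_cos_div_pow_atTop Θ).eventually
    (lt_mem_nhds ((div_lt_one hb).mpr hxy))).and (eventually_ne_atTop 0)).exists
  have hpow : 0 < cos (Θ / n) ^ n := (div_pos ha hb).trans hcos
  have hcos0 : cos (Θ / n) ≠ 0 := (pow_ne_zero_iff hn).mp hpow.ne'
  have hchain := reflTransGen_halfspaceStep_arcPoint hu hw huw hcos0 ‖x‖ 0 n
  rw [zero_add, mul_div_cancel₀ _ (Nat.cast_ne_zero.mpr hn), ← hxu] at hchain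
  refine hchain.tail ?_
  rw [div_lt_iff₀ hb] at hcos
  convert halfspaceStep_smul_self (t := ‖y‖ * cos (Θ / n) ^ n / ‖x‖)
    ((one_le_div ha).mpr (by linarith)) _ using 1
  conv_lhs => rw [hyw]
  rw [smul_smul]
  congr 1
  field_simp

end

theorem radially_increasing_general
    {H : Type*} [NormedAddCommGroup H] [InnerProductSpace ℝ H]
    (hdim : 2 ≤ Module.rank ℝ H) (φ : H → ℝ)
    (hφ : ∀ C : Set H, C.Nonempty → IsClosed C → Convex ℝ C →
      ∀ p, IsProj C 0 p → ∀ y ∈ C, φ p ≤ φ y) :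
    ∀ x y : H, ‖x‖ < ‖y‖ → φ x ≤ φ y := fun _ _ hxy =>
  le_of_reflTransGen_halfspaceStep hφ (reflTransGen_halfspaceStep_of_norm_lt hdim hxy)

theorem radially_increasing
    {H : Type*} [NormedAddCommGroup H] [InnerProductSpace ℝ H] [CompleteSpace H]
    (hdim : 2 ≤ Module.rank ℝ H) (φ : H → ℝ)
    (hφ : ∀ C : Set H, C.Nonempty → IsClosed C → Convex ℝ C →
      ∀ p, IsProj C 0 p → ∀ y ∈ C, φ p ≤ φ y) :
    ∀ x y : H, ‖x‖ < ‖y‖ → φ x ≤ φ y :=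
  radially_increasing_general hdim φ hφ
end

section
/- Let H be a real Hilbert space with dim H ≥ 2 and let φ : H → ℝ be such that for every nonempty closed convex set C ⊆ H, the projection P_C 0 of 0 onto C is the unique minimizer of φ on C. Then φ is strictly radially increasing: for all x, y ∈ H, ‖x‖ < ‖y‖ implies φ(x) < φ(y). -/
/-!
If `⟪p, p⟫ ≤ ⟪p, w⟫`, then `p` is the projection of `0` onto the segment `[p, w]`, so
`φ p ≤ φ w`, strictly if `w ≠ p`. Given `‖x‖ = r < R = ‖y‖`, write `x = r e₁` and
`y = R (cos θ e₁ + sin θ e₂)` with `e₁, e₂` orthonormal, and follow the spiral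
`z_j = (r / cos^j α) (cos jα e₁ + sin jα e₂)`, `α = θ / k`: each `z_{j+1}` lies on the tangent
line at `z_j` to the sphere of radius `‖z_j‖`, so `φ` does not decrease along it. As
`cos (θ / k) ^ k → 1`, for large `k` the point `z_k` is a positive multiple of `y` of norm `< R`,
and one last step reaches `y`.
-/

open RealInnerProductSpace Real Filter Topology

theorem one_sub_sq_div_le_cos_div_pow_s1 (θ : ℝ) (k : ℕ) :
    1 - θ ^ 2 / 2 / k ≤ cos (θ / k) ^ k := by
  rcases eq_or_ne k 0 with rfl | hk
  · simp
  calc 1 - θ ^ 2 / 2 / k = 1 + k * -((θ / k) ^ 2 / 2) := by field_simp; ring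
    _ ≤ 1 + k * (cos (θ / k) - 1) := by
      gcongr
      linarith [one_sub_sq_div_two_le_cos (x := θ / k)]
    _ ≤ (1 + (cos (θ / k) - 1)) ^ k :=
      one_add_mul_le_pow (by linarith [neg_one_le_cos (θ / k)]) k
    _ = cos (θ / k) ^ k := by ring

theorem tendsto_cos_div_pow (θ : ℝ) : Tendsto (fun k : ℕ => cos (θ / k) ^ k) atTop (𝓝 1) := by
  have hlower : Tendsto (fun k : ℕ => 1 - θ ^ 2 / 2 / k) atTop (𝓝 1) := by
    have := (tendsto_const_div_atTop_nhds_zero_nat (θ ^ 2 / 2)).const_sub (1 : ℝ)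
    rwa [sub_zero] at this
  refine tendsto_of_tendsto_of_tendsto_of_le_of_le hlower tendsto_const_nhds
    (one_sub_sq_div_le_cos_div_pow_s1 θ) fun k => ?_
  exact (le_abs_self _).trans
    (by rw [abs_pow]; exact pow_le_one₀ (abs_nonneg _) (abs_cos_le_one _))

theorem eventually_cos_div_pos_and_lt_pow (θ : ℝ) {q : ℝ} (hq : q < 1) :
    ∀ᶠ k : ℕ in atTop, 0 < cos (θ / k) ∧ q < cos (θ / k) ^ k := by
  have hcos : Tendsto (fun k : ℕ => cos (θ / k)) atTop (𝓝 1) := by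
    have := (continuous_cos.tendsto 0).comp (tendsto_const_div_atTop_nhds_zero_nat θ)
    rwa [cos_zero] at this
  exact (hcos.eventually_const_lt one_pos).and ((tendsto_cos_div_pow θ).eventually_const_lt hq)

theorem exists_eq_mul_cos_and_eq_mul_sin (a b : ℝ) :
    ∃ θ, a = √(a ^ 2 + b ^ 2) * cos θ ∧ b = √(a ^ 2 + b ^ 2) * sin θ := by
  refine ⟨Complex.arg ⟨a, b⟩, ?_, ?_⟩
  · simpa [Complex.norm_eq_sqrt_sq_add_sq] using (Complex.norm_mul_cos_arg ⟨a, b⟩).symm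
  · simpa [Complex.norm_eq_sqrt_sq_add_sq] using (Complex.norm_mul_sin_arg ⟨a, b⟩).symm

theorem isCompact_segment {E : Type*} [TopologicalSpace E] [AddCommGroup E] [Module ℝ E]
    [ContinuousAdd E] [ContinuousSMul ℝ E] (x y : E) : IsCompact (segment ℝ x y) := by
  rw [segment_eq_image]
  exact isCompact_Icc.image (by fun_prop)

theorem exists_norm_eq_one_and_eq_norm_smul {E : Type*} [NormedAddCommGroup E]
    [NormedSpace ℝ E] [Nontrivial E] (x : E) : ∃ e : E, ‖e‖ = 1 ∧ x = ‖x‖ • e := by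
  rcases eq_or_ne x 0 with rfl | hx
  · obtain ⟨e, he⟩ := exists_norm_eq E zero_le_one
    exact ⟨e, he, by simp⟩
  · refine ⟨‖x‖⁻¹ • x, ?_, ?_⟩
    · rw [norm_smul, norm_inv, norm_norm, inv_mul_cancel₀ (norm_ne_zero_iff.2 hx)]
    · rw [smul_smul, mul_inv_cancel₀ (norm_ne_zero_iff.2 hx), one_smul]

section InnerProductSpace

variable {H : Type*} [NormedAddCommGroup H] [InnerProductSpace ℝ H]

theorem isProj_zero_of_forall_inner_self_le {C : Set H} {p : H} (hp : p ∈ C)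
    (hC : ∀ z ∈ C, ⟪p, p⟫ ≤ ⟪p, z⟫) : IsProj C 0 p := by
  refine ⟨hp, fun z hz => ?_⟩
  have hpz : ‖p‖ * ‖p‖ ≤ ‖p‖ * ‖z‖ := by
    rw [← real_inner_self_eq_norm_mul_norm]
    exact (hC z hz).trans (real_inner_le_norm p z)
  simp only [zero_sub, norm_neg]
  nlinarith [norm_nonneg p, norm_nonneg z]

theorem isProj_zero_segment {p w : H} (h : ⟪p, p⟫ ≤ ⟪p, w⟫) :
    IsProj (segment ℝ p w) 0 p := by
  refine isProj_zero_of_forall_inner_self_le (left_mem_segment ℝ p w) fun z hz => ?_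
  have hhalf : Convex ℝ {z : H | ⟪p, p⟫ ≤ ⟪p, z⟫} :=
    convex_halfSpace_ge (innerₛₗ ℝ p).isLinear _
  exact hhalf.segment_subset (le_refl ⟪p, p⟫) h hz

theorem orthonormal_pair_iff {e₁ e₂ : H} :
    Orthonormal ℝ ![e₁, e₂] ↔ ‖e₁‖ = 1 ∧ ‖e₂‖ = 1 ∧ ⟪e₁, e₂⟫ = 0 := by
  have h₁ : ‖e₁‖ ≠ -1 := by linarith [norm_nonneg e₁]
  have h₂ : ‖e₂‖ ≠ -1 := by linarith [norm_nonneg e₂]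
  simp [orthonormal_iff_ite, Fin.forall_fin_two, real_inner_comm e₁ e₂, h₁, h₂]
  tauto

theorem nontrivial_orthogonal_span_singleton (hdim : 2 ≤ Module.rank ℝ H) (e : H) :
    Nontrivial (ℝ ∙ e)ᗮ := by
  rw [Submodule.nontrivial_iff_ne_bot, Ne, Submodule.orthogonal_eq_bot_iff]
  intro htop
  have : Module.rank ℝ H ≤ 1 := by
    rw [← rank_top, ← htop]
    simpa using rank_span_le ({e} : Set H)
  exact absurd (hdim.trans this) (by norm_num)

section PlaneCircle

noncomputable def planeCircle (e₁ e₂ : H) (t : ℝ) : H := cos t • e₁ + sin t • e₂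

variable {e₁ e₂ : H}

theorem inner_planeCircle (he : Orthonormal ℝ ![e₁, e₂]) (s t : ℝ) :
    ⟪planeCircle e₁ e₂ s, planeCircle e₁ e₂ t⟫ = cos (s - t) := by
  obtain ⟨h₁, h₂, h₁₂⟩ := orthonormal_pair_iff.1 he
  simp only [planeCircle, inner_add_left, inner_add_right, real_inner_smul_left,
    real_inner_smul_right, real_inner_self_eq_norm_sq, h₁, h₂, h₁₂, real_inner_comm e₁ e₂,
    cos_sub]
  ring

theorem norm_planeCircle (he : Orthonormal ℝ ![e₁, e₂]) (t : ℝ) : ‖planeCircle e₁ e₂ t‖ = 1 := by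
  rw [norm_eq_sqrt_real_inner, inner_planeCircle he, sub_self, cos_zero, sqrt_one]

theorem norm_smul_planeCircle (he : Orthonormal ℝ ![e₁, e₂]) {ρ : ℝ} (hρ : 0 ≤ ρ) (t : ℝ) :
    ‖ρ • planeCircle e₁ e₂ t‖ = ρ := by
  rw [norm_smul, norm_planeCircle he, mul_one, norm_of_nonneg hρ]

theorem inner_smul_planeCircle (he : Orthonormal ℝ ![e₁, e₂]) (ρ ρ' s t : ℝ) :
    ⟪ρ • planeCircle e₁ e₂ s, ρ' • planeCircle e₁ e₂ t⟫ = ρ * ρ' * cos (s - t) := by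
  rw [real_inner_smul_left, real_inner_smul_right, inner_planeCircle he, mul_assoc]

theorem inner_self_le_inner_smul_planeCircle (he : Orthonormal ℝ ![e₁, e₂]) {ρ ρ' s t : ℝ}
    (hρ : 0 ≤ ρ) (h : ρ ≤ ρ' * cos (s - t)) :
    ⟪ρ • planeCircle e₁ e₂ s, ρ • planeCircle e₁ e₂ s⟫ ≤
      ⟪ρ • planeCircle e₁ e₂ s, ρ' • planeCircle e₁ e₂ t⟫ := by
  rw [inner_smul_planeCircle he, inner_smul_planeCircle he, sub_self, cos_zero, mul_one,
    mul_assoc]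
  exact mul_le_mul_of_nonneg_left h hρ

theorem exists_smul_add_smul_eq_smul_planeCircle (e₁ e₂ : H) (a b : ℝ) :
    ∃ θ, a • e₁ + b • e₂ = √(a ^ 2 + b ^ 2) • planeCircle e₁ e₂ θ := by
  obtain ⟨θ, ha, hb⟩ := exists_eq_mul_cos_and_eq_mul_sin a b
  refine ⟨θ, ?_⟩
  rw [planeCircle, smul_add, smul_smul, smul_smul, ← ha, ← hb]

theorem exists_orthonormal_polar (hdim : 2 ≤ Module.rank ℝ H) (x y : H) :
    ∃ e₁ e₂ : H, Orthonormal ℝ ![e₁, e₂] ∧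
      ∃ θ, x = ‖x‖ • e₁ ∧ y = ‖y‖ • planeCircle e₁ e₂ θ := by
  have : Nontrivial H := rank_pos_iff_nontrivial.1 (lt_of_lt_of_le (by norm_num) hdim)
  obtain ⟨e₁, he₁, hx⟩ := exists_norm_eq_one_and_eq_norm_smul x
  have := nontrivial_orthogonal_span_singleton hdim e₁
  set a := ⟪e₁, y⟫
  let w : (ℝ ∙ e₁)ᗮ := ⟨y - a • e₁, by
    rw [Submodule.mem_orthogonal_singleton_iff_inner_right, inner_sub_right,
      real_inner_smul_right, real_inner_self_eq_norm_sq, he₁]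
    ring⟩
  obtain ⟨e₂, he₂, hw⟩ := exists_norm_eq_one_and_eq_norm_smul w
  have he : Orthonormal ℝ ![e₁, (e₂ : H)] := orthonormal_pair_iff.2
    ⟨he₁, by simpa using he₂, Submodule.mem_orthogonal_singleton_iff_inner_right.1 e₂.2⟩
  obtain ⟨θ, hθ⟩ := exists_smul_add_smul_eq_smul_planeCircle e₁ (e₂ : H) a ‖w‖
  have hy : y = √(a ^ 2 + ‖w‖ ^ 2) • planeCircle e₁ e₂ θ := by
    rw [← hθ, ← Submodule.coe_smul, ← hw]
    exact (add_sub_cancel _ y).symm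
  have hnorm : ‖y‖ = √(a ^ 2 + ‖w‖ ^ 2) :=
    (congrArg norm hy).trans (norm_smul_planeCircle he (sqrt_nonneg _) θ)
  exact ⟨e₁, e₂, he, θ, hx, hnorm ▸ hy⟩

end PlaneCircle

def StrictlyMinimizedAtProj (φ : H → ℝ) : Prop :=
  ∀ C : Set H, C.Nonempty → IsClosed C → Convex ℝ C →
    ∀ p, IsProj C 0 p → ∀ y ∈ C, y ≠ p → φ p < φ y

namespace StrictlyMinimizedAtProj

variable {φ : H → ℝ} {p w e₁ e₂ : H} {ρ ρ' s t : ℝ}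

theorem lt_of_inner_self_le (hφ : StrictlyMinimizedAtProj φ) (hne : w ≠ p)
    (h : ⟪p, p⟫ ≤ ⟪p, w⟫) : φ p < φ w :=
  hφ _ ⟨p, left_mem_segment ℝ p w⟩ (isCompact_segment p w).isClosed (convex_segment p w) p
    (isProj_zero_segment h) w (right_mem_segment ℝ p w) hne

theorem le_of_inner_self_le (hφ : StrictlyMinimizedAtProj φ) (h : ⟪p, p⟫ ≤ ⟪p, w⟫) :
    φ p ≤ φ w := by
  rcases eq_or_ne w p with rfl | hne
  · exact le_rfl
  · exact (hφ.lt_of_inner_self_le hne h).le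

theorem le_smul_planeCircle (hφ : StrictlyMinimizedAtProj φ) (he : Orthonormal ℝ ![e₁, e₂])
    (hρ : 0 ≤ ρ) (h : ρ ≤ ρ' * cos (s - t)) :
    φ (ρ • planeCircle e₁ e₂ s) ≤ φ (ρ' • planeCircle e₁ e₂ t) :=
  hφ.le_of_inner_self_le (inner_self_le_inner_smul_planeCircle he hρ h)

theorem lt_smul_planeCircle (hφ : StrictlyMinimizedAtProj φ) (he : Orthonormal ℝ ![e₁, e₂])
    (hρ : 0 ≤ ρ) (hρρ' : ρ < ρ') (h : ρ ≤ ρ' * cos (s - t)) :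
    φ (ρ • planeCircle e₁ e₂ s) < φ (ρ' • planeCircle e₁ e₂ t) := by
  refine hφ.lt_of_inner_self_le (fun heq => hρρ'.ne' ?_)
    (inner_self_le_inner_smul_planeCircle he hρ h)
  simpa [norm_smul_planeCircle he, hρ, hρ.trans hρρ'.le] using congrArg norm heq

theorem le_spiral (hφ : StrictlyMinimizedAtProj φ) (he : Orthonormal ℝ ![e₁, e₂]) {r α : ℝ}
    (hr : 0 ≤ r) (hα : 0 < cos α) (k : ℕ) :
    φ (r • e₁) ≤ φ ((r / cos α ^ k) • planeCircle e₁ e₂ (k * α)) := by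
  induction k with
  | zero => simp [planeCircle]
  | succ k ih =>
    refine ih.trans (hφ.le_smul_planeCircle he (by positivity) (le_of_eq ?_))
    rw [show (k : ℝ) * α - (k + 1 : ℕ) * α = -α by push_cast; ring, cos_neg, pow_succ]
    field_simp

end StrictlyMinimizedAtProj

end InnerProductSpace

theorem strictly_radially_increasing_general
    {H : Type*} [NormedAddCommGroup H] [InnerProductSpace ℝ H]
    (hdim : 2 ≤ Module.rank ℝ H) (φ : H → ℝ)
    (hφ : ∀ C : Set H, C.Nonempty → IsClosed C → Convex ℝ C →
      ∀ p, IsProj C 0 p → ∀ y ∈ C, y ≠ p → φ p < φ y) :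
    ∀ x y : H, ‖x‖ < ‖y‖ → φ x < φ y := by
  intro x y hxy
  have hφ : StrictlyMinimizedAtProj φ := hφ
  have hy₀ : 0 < ‖y‖ := (norm_nonneg x).trans_lt hxy
  obtain ⟨e₁, e₂, he, θ, hx, hy⟩ := exists_orthonormal_polar hdim x y
  obtain ⟨k, hk, hcos, hpow⟩ := ((eventually_ne_atTop 0).and
    (eventually_cos_div_pos_and_lt_pow θ ((div_lt_one hy₀).2 hxy))).exists
  have hkθ : (k : ℝ) * (θ / k) = θ := mul_div_cancel₀ θ (Nat.cast_ne_zero.2 hk)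
  have hlast : ‖x‖ / cos (θ / k) ^ k < ‖y‖ := by
    rwa [div_lt_iff₀ (pow_pos hcos k), ← div_lt_iff₀' hy₀]
  calc φ x = φ (‖x‖ • e₁) := congrArg φ hx
    _ ≤ φ ((‖x‖ / cos (θ / k) ^ k) • planeCircle e₁ e₂ (k * (θ / k))) :=
      hφ.le_spiral he (norm_nonneg x) hcos k
    _ < φ (‖y‖ • planeCircle e₁ e₂ θ) := by
      rw [hkθ]
      refine hφ.lt_smul_planeCircle he (by positivity) hlast ?_
      rw [sub_self, cos_zero, mul_one]
      exact hlast.le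
    _ = φ y := congrArg φ hy.symm

theorem strictly_radially_increasing
    {H : Type*} [NormedAddCommGroup H] [InnerProductSpace ℝ H] [CompleteSpace H]
    (hdim : 2 ≤ Module.rank ℝ H) (φ : H → ℝ)
    (hφ : ∀ C : Set H, C.Nonempty → IsClosed C → Convex ℝ C →
      ∀ p, IsProj C 0 p → ∀ y ∈ C, y ≠ p → φ p < φ y) :
    ∀ x y : H, ‖x‖ < ‖y‖ → φ x < φ y :=
  strictly_radially_increasing_general hdim φ hφ
end

section
/- Let H be a real Hilbert space with dim H ≥ 2 and let φ : H → ℝ be lower semicontinuous (or upper semicontinuous) and such that for every nonempty closed convex set C ⊆ H the infimum of φ on C is attained at P_C 0. Then there exists an increasing function θ : [0,∞) → ℝ with φ = θ ∘ ‖·‖. -/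
open Relation
open scoped RealInnerProductSpace

theorem exists_inv_le_cos_div_pow (α : ℝ) {ρ : ℝ} (hρ : 1 < ρ) :
    ∃ n : ℕ, 0 < n ∧ ρ⁻¹ ≤ Real.cos (α / n) ^ n := by
  set a := α ^ 2 / 2
  have hρ₀ : 0 < ρ⁻¹ := inv_pos.2 (by linarith)
  have hgap : 0 < 1 - ρ⁻¹ := sub_pos.2 (inv_lt_one_of_one_lt₀ hρ)
  obtain ⟨n, hn⟩ := exists_nat_gt (a / (1 - ρ⁻¹))
  have hn₀ : (0 : ℝ) < n := lt_of_le_of_lt (by positivity) hn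
  have han : a / n < 1 - ρ⁻¹ := by rwa [div_lt_iff₀ hn₀, mul_comm, ← div_lt_iff₀ hgap]
  have hn₁ : (1 : ℝ) ≤ n := Nat.one_le_cast.2 (Nat.cast_pos.1 hn₀)
  have hsq : a / n ^ 2 ≤ a / n :=
    div_le_div_of_nonneg_left (by positivity) hn₀ (by nlinarith)
  refine ⟨n, Nat.cast_pos.1 hn₀, ?_⟩
  calc ρ⁻¹ ≤ 1 + n * (-(a / n ^ 2)) := by
        have : (n : ℝ) * (a / n ^ 2) = a / n := by field_simp
        linarith
    _ ≤ (1 + -(a / n ^ 2)) ^ n := one_add_mul_le_pow (by linarith) n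
    _ ≤ Real.cos (α / n) ^ n := by
        gcongr
        · linarith
        · have := Real.one_sub_sq_div_two_le_cos (x := α / n)
          have e : (α / n) ^ 2 / 2 = a / n ^ 2 := by ring
          linarith

-- `q` lies in the closed half-space beyond the hyperplane through `p` orthogonal to `p`.
def IsBeyond {E : Type*} [NormedAddCommGroup E] [InnerProductSpace ℝ E] (p q : E) : Prop :=
  ‖p‖ ^ 2 ≤ ⟪p, q⟫

section IsBeyond

variable {E F : Type*} [NormedAddCommGroup E] [InnerProductSpace ℝ E]
  [NormedAddCommGroup F] [InnerProductSpace ℝ F]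

theorem isClosed_setOf_isBeyond (p : E) : IsClosed {q | IsBeyond p q} :=
  isClosed_le continuous_const (continuous_const.inner continuous_id)

theorem convex_setOf_isBeyond (p : E) : Convex ℝ {q | IsBeyond p q} :=
  convex_halfSpace_ge (innerₛₗ ℝ p).isLinear _

theorem isProj_zero_setOf_isBeyond (p : E) : IsProj {q | IsBeyond p q} 0 p := by
  refine ⟨by simp [IsBeyond], fun y (hy : ‖p‖ ^ 2 ≤ ⟪p, y⟫) => ?_⟩
  rw [zero_sub, zero_sub, norm_neg, norm_neg]
  nlinarith [real_inner_le_norm p y, norm_nonneg p, norm_nonneg y]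

theorem le_of_isBeyond {φ : E → ℝ}
    (hφ : ∀ C : Set E, C.Nonempty → IsClosed C → Convex ℝ C →
      ∀ p, IsProj C 0 p → ∀ y ∈ C, φ p ≤ φ y)
    {p y : E} (h : IsBeyond p y) : φ p ≤ φ y :=
  hφ _ ⟨p, (isProj_zero_setOf_isBeyond p).1⟩ (isClosed_setOf_isBeyond p)
    (convex_setOf_isBeyond p) p (isProj_zero_setOf_isBeyond p) y h

theorem LinearIsometry.isBeyond_map_iff (L : E →ₗᵢ[ℝ] F) {p q : E} :
    IsBeyond (L p) (L q) ↔ IsBeyond p q := by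
  simp only [IsBeyond, L.norm_map, L.inner_map_map]

end IsBeyond

namespace Complex

theorem isBeyond_mul (p : ℂ) {c : ℂ} (hc : 1 ≤ c.re) : IsBeyond p (p * c) := by
  have : ⟪p, p * c⟫ = ‖p‖ ^ 2 * c.re := by
    rw [Complex.inner, mul_right_comm, mul_conj, normSq_eq_norm_sq, re_ofReal_mul]
  rw [IsBeyond, this]
  exact le_mul_of_one_le_right (sq_nonneg _) hc

theorem reflTransGen_isBeyond_mul_pow (p : ℂ) {c : ℂ} (hc : 1 ≤ c.re) (n : ℕ) :
    ReflTransGen IsBeyond p (p * c ^ n) := by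
  induction n with
  | zero => simp [ReflTransGen.refl]
  | succ n ih => exact ih.tail (by rw [pow_succ, ← mul_assoc]; exact isBeyond_mul _ hc)

theorem exists_eq_pow_mul_ofReal (q : ℂ) (hq : 1 < ‖q‖) :
    ∃ (c : ℂ) (n : ℕ) (t : ℝ), 1 ≤ c.re ∧ 1 ≤ t ∧ q = c ^ n * t := by
  obtain ⟨n, hn, hcos⟩ := exists_inv_le_cos_div_pow (arg q) hq
  set β := arg q / n
  have hρ : 0 < ‖q‖ := by linarith
  have hpow : 0 < Real.cos β ^ n := lt_of_lt_of_le (inv_pos.2 hρ) hcos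
  have hβ : Real.cos β ≠ 0 := fun h => by simp [h, hn.ne'] at hpow
  refine ⟨exp (β * I) / Real.cos β, n, ‖q‖ * Real.cos β ^ n, ?_, ?_, ?_⟩
  · rw [div_ofReal_re, exp_ofReal_mul_I_re, div_self hβ]
  · rwa [← inv_le_iff_one_le_mul₀' hρ]
  · have hαβ : (n : ℂ) * (β * I) = arg q * I := by
      have : (n : ℂ) ≠ 0 := by exact_mod_cast hn.ne'
      simp only [β]; push_cast; field_simp
    conv_lhs => rw [← norm_mul_exp_arg_mul_I q, ← hαβ, exp_nat_mul]
    have hβ' : (Real.cos β : ℂ) ^ n ≠ 0 := by exact_mod_cast hpow.ne'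
    rw [ofReal_mul, ofReal_pow, div_pow]
    field_simp

theorem reflTransGen_isBeyond_of_norm_lt {z w : ℂ} (h : ‖z‖ < ‖w‖) :
    ReflTransGen IsBeyond z w := by
  rcases eq_or_ne z 0 with rfl | hz
  · exact .single (by simp [IsBeyond])
  have hq : 1 < ‖w / z‖ := by rwa [norm_div, one_lt_div (norm_pos_iff.2 hz)]
  obtain ⟨c, n, t, hc, ht, hwz⟩ := exists_eq_pow_mul_ofReal _ hq
  rw [div_eq_iff hz, mul_comm] at hwz
  rw [hwz, ← mul_assoc]
  exact (reflTransGen_isBeyond_mul_pow z hc n).tail (isBeyond_mul _ (by simpa using ht))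

end Complex

section Plane

variable {E : Type*} [NormedAddCommGroup E] [InnerProductSpace ℝ E]

theorem exists_norm_eq_one_inner_eq_zero_smul_eq (hdim : 2 ≤ Module.rank ℝ E) {u w : E}
    (hw : ⟪u, w⟫ = 0) : ∃ v : E, ‖v‖ = 1 ∧ ⟪u, v⟫ = 0 ∧ ∃ b : ℝ, w = b • v := by
  rcases eq_or_ne w 0 with rfl | hw₀
  · have hK : (ℝ ∙ u)ᗮ ≠ ⊥ := by
      rw [Ne, Submodule.orthogonal_eq_bot_iff]
      intro htop
      have h1 : Module.rank ℝ (ℝ ∙ u) ≤ 1 := by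
        simpa using rank_span_le (R := ℝ) ({u} : Set E)
      rw [htop, rank_top] at h1
      exact absurd (hdim.trans h1) (by norm_num)
    obtain ⟨v, hv, hv₀⟩ := Submodule.exists_mem_ne_zero_of_ne_bot hK
    refine ⟨‖v‖⁻¹ • v, by simp [norm_smul, hv₀], ?_, 0, by simp⟩
    rw [inner_smul_right, Submodule.mem_orthogonal_singleton_iff_inner_right.1 hv, mul_zero]
  · refine ⟨‖w‖⁻¹ • w, by simp [norm_smul, hw₀], by rw [inner_smul_right, hw, mul_zero], ‖w‖, ?_⟩
    rw [smul_smul, mul_inv_cancel₀ (norm_ne_zero_iff.2 hw₀), one_smul]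

theorem exists_linearIsometry_complex_apply_eq (hdim : 2 ≤ Module.rank ℝ E) (x y : E) :
    ∃ (L : ℂ →ₗᵢ[ℝ] E) (z w : ℂ), L z = x ∧ L w = y := by
  obtain ⟨u, hu, -, a, rfl⟩ := exists_norm_eq_one_inner_eq_zero_smul_eq hdim (inner_zero_left x)
  have hy : ⟪u, y - ⟪u, y⟫ • u⟫ = 0 := by
    rw [inner_sub_right, inner_smul_right, real_inner_self_eq_norm_sq, hu]; ring
  obtain ⟨v, hv, huv, b, hb⟩ := exists_norm_eq_one_inner_eq_zero_smul_eq hdim hy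
  let f : ℂ →ₗ[ℝ] E := Complex.reLm.smulRight u + Complex.imLm.smulRight v
  have hf : ∀ z w, ⟪f z, f w⟫ = ⟪z, w⟫ := by
    intro z w
    simp [f, Complex.inner, inner_add_left, inner_add_right, inner_smul_left, inner_smul_right,
      hu, hv, huv, real_inner_comm u v]
  refine ⟨f.isometryOfInner hf, a, ⟪u, y⟫ + b * Complex.I, by simp [f], ?_⟩
  simp [f, ← hb]

theorem reflTransGen_isBeyond_of_norm_lt (hdim : 2 ≤ Module.rank ℝ E) {x y : E}
    (h : ‖x‖ < ‖y‖) : ReflTransGen IsBeyond x y := by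
  obtain ⟨L, z, w, rfl, rfl⟩ := exists_linearIsometry_complex_apply_eq hdim x y
  rw [L.norm_map, L.norm_map] at h
  exact (Complex.reflTransGen_isBeyond_of_norm_lt h).lift L fun _ _ => L.isBeyond_map_iff.2

end Plane

section Semicontinuity

variable {E : Type*} [NormedAddCommGroup E] [NormedSpace ℝ E] {φ : E → ℝ}

theorem le_of_norm_le_of_semicontinuous (hsc : LowerSemicontinuous φ ∨ UpperSemicontinuous φ)
    (h : ∀ x y : E, ‖x‖ < ‖y‖ → φ x ≤ φ y) {x y : E} (hxy : ‖x‖ ≤ ‖y‖) : φ x ≤ φ y := by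
  rcases hxy.lt_or_eq with hlt | heq
  · exact h x y hlt
  rcases eq_or_ne x 0 with rfl | hx
  · rw [norm_zero, eq_comm, norm_eq_zero] at heq
    rw [heq]
  have hy : ‖y‖ ≠ 0 := heq ▸ norm_ne_zero_iff.2 hx
  rcases hsc with hlsc | husc
  · have hball : Metric.ball 0 ‖y‖ ⊆ φ ⁻¹' Set.Iic (φ y) := fun z hz =>
      h z y (mem_ball_zero_iff.1 hz)
    have := closure_minimal hball (hlsc.isClosed_preimage (φ y))
    rw [closure_ball 0 hy] at this
    exact this (mem_closedBall_zero_iff.2 hxy)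
  · have hcompl : (Metric.closedBall 0 ‖x‖)ᶜ ⊆ φ ⁻¹' Set.Ici (φ x) := fun z hz =>
      h x z (by simpa using hz)
    have := closure_minimal hcompl (husc.isClosed_preimage (φ x))
    rw [closure_compl, interior_closedBall 0 (heq ▸ hy)] at this
    exact this (by simpa using hxy)

theorem exists_monotoneOn_comp_norm [Nontrivial E] (h : ∀ x y : E, ‖x‖ ≤ ‖y‖ → φ x ≤ φ y) :
    ∃ θ : ℝ → ℝ, MonotoneOn θ (Set.Ici 0) ∧ ∀ x : E, φ x = θ ‖x‖ := by
  obtain ⟨e, he⟩ := exists_norm_eq E zero_le_one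
  have hnorm : ∀ {t : ℝ}, 0 ≤ t → ‖t • e‖ = t := fun ht => by
    rw [norm_smul, he, mul_one, Real.norm_of_nonneg ht]
  refine ⟨fun t => φ (t • e), fun s hs t ht hst => h _ _ ?_, fun x => ?_⟩
  · rwa [hnorm hs, hnorm ht]
  · have hx := hnorm (norm_nonneg x)
    exact le_antisymm (h _ _ hx.ge) (h _ _ hx.le)

end Semicontinuity

theorem semicontinuous_radial_representation_general
    {H : Type*} [NormedAddCommGroup H] [InnerProductSpace ℝ H]
    (hdim : 2 ≤ Module.rank ℝ H) (φ : H → ℝ)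
    (hsc : LowerSemicontinuous φ ∨ UpperSemicontinuous φ)
    (hφ : ∀ C : Set H, C.Nonempty → IsClosed C → Convex ℝ C →
      ∀ p, IsProj C 0 p → ∀ y ∈ C, φ p ≤ φ y) :
    ∃ θ : ℝ → ℝ, MonotoneOn θ (Set.Ici (0 : ℝ)) ∧ ∀ x : H, φ x = θ ‖x‖ := by
  have hlt : ∀ x y : H, ‖x‖ < ‖y‖ → φ x ≤ φ y := fun x y h =>
    reflTransGen_eq_self.le _ _ <|
      (reflTransGen_isBeyond_of_norm_lt hdim h).lift φ fun _ _ => le_of_isBeyond hφ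
  have : Nontrivial H := rank_pos_iff_nontrivial.1 (lt_of_lt_of_le (by norm_num) hdim)
  exact exists_monotoneOn_comp_norm fun x y => le_of_norm_le_of_semicontinuous hsc hlt

theorem semicontinuous_radial_representation
    {H : Type*} [NormedAddCommGroup H] [InnerProductSpace ℝ H] [CompleteSpace H]
    (hdim : 2 ≤ Module.rank ℝ H) (φ : H → ℝ)
    (hsc : LowerSemicontinuous φ ∨ UpperSemicontinuous φ)
    (hφ : ∀ C : Set H, C.Nonempty → IsClosed C → Convex ℝ C →
      ∀ p, IsProj C 0 p → ∀ y ∈ C, φ p ≤ φ y) :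
    ∃ θ : ℝ → ℝ, MonotoneOn θ (Set.Ici (0 : ℝ)) ∧ ∀ x : H, φ x = θ ‖x‖ :=
  semicontinuous_radial_representation_general hdim φ hsc hφ
end

section
/- In a real Hilbert space H, let x ≠ 0 and y be vectors with ‖x‖ < ‖y‖, let α ∈ [0,π] be the angle between x and y, and for each integer n ≥ 3 consider the polygonal spiral obtained by successively projecting y onto n angularly equispaced rays (in a two-dimensional subspace containing x and y) between [0,∞)·y and [0,∞)·x. Then the final point x_{n,n} is a nonnegative multiple of x with ‖x_{n,n}‖ = ‖y‖ (cos(α/n))^n; in particular, for all sufficiently large n, ‖x_{n,n}‖ > ‖x‖. -/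
open scoped RealInnerProductSpace

theorem polygonal_spiral
    {H : Type*} [NormedAddCommGroup H] [InnerProductSpace ℝ H] [CompleteSpace H]
    (x y : H) (hx : x ≠ 0) (hxy : ‖x‖ < ‖y‖)
    (α : ℝ) (hα : α = InnerProductGeometry.angle x y)
    (n : ℕ) (hn : 3 ≤ n)
    (u : ℕ → H) (hu : ∀ k ≤ n, ‖u k‖ = 1)
    (hu0 : u 0 = ‖y‖⁻¹ • y) (hun : u n = ‖x‖⁻¹ • x)
    (hang : ∀ k < n, InnerProductGeometry.angle (u k) (u (k + 1)) = α / n)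
    (X : ℕ → H) (hX0 : X 0 = y)
    (hXs : ∀ k < n, X (k + 1) = ⟪X k, u (k + 1)⟫ • u (k + 1)) :
    (∃ t : ℝ, 0 ≤ t ∧ X n = t • x) ∧
      ‖X n‖ = ‖y‖ * (Real.cos (α / n)) ^ n ∧
      ∃ N : ℕ, ∀ m ≥ N, ‖x‖ < ‖y‖ * (Real.cos (α / m)) ^ m := by
  have hyn : (0:ℝ) < ‖y‖ := lt_of_le_of_lt (norm_nonneg x) hxy
  have hα0 : 0 ≤ α := hα ▸ InnerProductGeometry.angle_nonneg x y
  have hαπ : α ≤ Real.pi := hα ▸ InnerProductGeometry.angle_le_pi x y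
  have hn0 : (0:ℝ) < n := by positivity
  have hcos : 0 ≤ Real.cos (α / n) := by
    apply Real.cos_nonneg_of_mem_Icc
    constructor
    · have : (0:ℝ) ≤ α / n := by positivity
      linarith [Real.pi_pos]
    · have h3 : (3:ℝ) ≤ n := by exact_mod_cast hn
      rw [div_le_iff₀ hn0]
      nlinarith [Real.pi_pos]
  have key : ∀ k, k ≤ n → X k = (‖y‖ * Real.cos (α / n) ^ k) • u k := by
    intro k
    induction k with
    | zero =>
      intro _
      simp only [pow_zero, mul_one, hX0, hu0, smul_smul]
      rw [mul_inv_cancel₀ hyn.ne', one_smul]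
    | succ k ih =>
      intro hk
      have hk' : k < n := hk
      have h1 : ⟪u k, u (k+1)⟫ = Real.cos (α / n) := by
        have h := InnerProductGeometry.cos_angle (u k) (u (k+1))
        rw [hang k hk', hu k hk'.le, hu (k+1) hk] at h
        simpa using h.symm
      rw [hXs k hk', ih hk'.le, real_inner_smul_left, h1]
      congr 1
      ring
  have hXn : X n = (‖y‖ * Real.cos (α / n) ^ n * ‖x‖⁻¹) • x := by
    rw [key n le_rfl, hun, smul_smul]
  refine ⟨⟨_, by positivity, hXn⟩, ?_, ?_⟩
  · rw [key n le_rfl, norm_smul, hu n le_rfl, mul_one,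
      Real.norm_eq_abs, abs_of_nonneg (by positivity)]
  · have h0 : Filter.Tendsto (fun m : ℕ => (1:ℝ)/m) Filter.atTop (nhds 0) :=
      tendsto_one_div_atTop_nhds_zero_nat
    have hlo : Filter.Tendsto (fun m : ℕ => 1 - α^2/2 * (1/m)) Filter.atTop (nhds 1) := by
      have := (h0.const_mul (α^2/2)).const_sub 1
      simpa using this
    have hsq : Filter.Tendsto (fun m : ℕ => Real.cos (α/m) ^ m) Filter.atTop (nhds 1) := by
      apply tendsto_of_tendsto_of_tendsto_of_le_of_le' hlo tendsto_const_nhds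
      · filter_upwards [Filter.eventually_gt_atTop (⌈α⌉₊)] with m hm
        have hm0 : (0:ℝ) < m := by
          exact_mod_cast lt_of_le_of_lt (Nat.zero_le _) hm
        have hαm : α / m < 1 := by
          rw [div_lt_one hm0]
          calc α ≤ ⌈α⌉₊ := Nat.le_ceil α
            _ < m := by exact_mod_cast hm
        have hαm0 : 0 ≤ α / m := by positivity
        have hsqlt : (α/m)^2 < 1 := by nlinarith
        have hb0 : 0 ≤ 1 - (α/m)^2/2 := by nlinarith
        have hbern : 1 + (m:ℝ) * (-((α/m)^2/2)) ≤ (1 + (-((α/m)^2/2)))^m := by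
          apply one_add_mul_le_pow
          nlinarith
        have heq : 1 + (m:ℝ) * (-((α/m)^2/2)) = 1 - α^2/2 * (1/m) := by
          field_simp
          ring
        calc 1 - α^2/2 * (1/m) = 1 + (m:ℝ) * (-((α/m)^2/2)) := heq.symm
          _ ≤ (1 - (α/m)^2/2)^m := by
              rw [show (1:ℝ) - (α/m)^2/2 = 1 + (-((α/m)^2/2)) by ring]; exact hbern
          _ ≤ Real.cos (α/m) ^ m := by
              apply pow_le_pow_left₀ hb0 (Real.one_sub_sq_div_two_le_cos)
      · filter_upwards [Filter.eventually_gt_atTop (⌈α⌉₊)] with m hm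
        have hm0 : (0:ℝ) < m := by
          exact_mod_cast lt_of_le_of_lt (Nat.zero_le _) hm
        have hαm : α / m < 1 := by
          rw [div_lt_one hm0]
          calc α ≤ ⌈α⌉₊ := Nat.le_ceil α
            _ < m := by exact_mod_cast hm
        have hc0 : 0 ≤ Real.cos (α/m) := by
          apply Real.cos_nonneg_of_mem_Icc
          constructor
          · have : (0:ℝ) ≤ α / m := by positivity
            linarith [Real.pi_pos]
          · nlinarith [Real.pi_gt_three]
        exact pow_le_one₀ hc0 (Real.cos_le_one _)
    have hmain : Filter.Tendsto (fun m : ℕ => ‖y‖ * Real.cos (α/m) ^ m)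
        Filter.atTop (nhds ‖y‖) := by
      have := hsq.const_mul ‖y‖
      simpa using this
    have := hmain.eventually (eventually_gt_nhds hxy)
    rw [Filter.eventually_atTop] at this
    exact this
end

section
/- Let H be a real Hilbert space with dim H ≥ 2 and let m ≥ 3 be an integer. There exists no function Φ : H^m → ℝ such that for every ordered family (C_1,…,C_m) of nonempty closed convex subsets of H, the set of cycles cyc(C_1,…,C_m) equals the set of minimizers of Φ over C_1 × ⋯ × C_m. -/
/-- `y` is a cycle of the ordered family of sets `C`:
`y i` is the projection of `y (i+1)` onto `C i` (indices mod `m`). -/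
def IsCycle {E : Type*} [NormedAddCommGroup E] {m : ℕ} [NeZero m]
    (C : Fin m → Set E) (y : Fin m → E) : Prop :=
  ∀ i : Fin m, IsProj (C i) (y (i + 1)) (y i)

/-!
Suppose the cycles of every family were the minimizers of `Φ`. Given a configuration `a` with
`a k ≠ a (k+1)`, take `C k` the segment `[a (k+1), a k]` and all other `C i = {a i}`. Then `a` is
not a cycle, while `a` with `a k` replaced by `a (k+1)` is one, so this replacement strictly
decreases `Φ`. For `x ≠ 0` and `m ≥ 3`, two such replacements move `Pi.single (k+1) x` to
`Pi.single k x`, so `k ↦ Φ (Pi.single k x)` strictly increases all the way around `Fin m`,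
which is absurd at its maximum.
-/

open Function

theorem Fin.add_one_ne_self {m : ℕ} [NeZero m] (hm : 2 ≤ m) (k : Fin m) : k + 1 ≠ k := by
  obtain ⟨n, rfl⟩ : ∃ n, m = n + 2 := ⟨m - 2, by omega⟩
  intro h
  have h1 : (1 : Fin (n + 2)) = 0 := by simpa using congrArg (· - k) h
  simp at h1

theorem Fin.add_one_add_one_ne_self {m : ℕ} [NeZero m] (hm : 3 ≤ m) (k : Fin m) :
    k + 1 + 1 ≠ k := by
  obtain ⟨n, rfl⟩ : ∃ n, m = n + 3 := ⟨m - 3, by omega⟩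
  intro h
  have h2 : (1 + 1 : Fin (n + 3)) = 0 := by simpa [add_assoc] using congrArg (· - k) h
  rw [Fin.ext_iff, Fin.val_add, Fin.val_one, Nat.mod_eq_of_lt (by omega)] at h2
  simp at h2

section Projection

variable {E : Type*} [NormedAddCommGroup E]

theorem isProj_self {C : Set E} {x : E} (hx : x ∈ C) : IsProj C x x :=
  ⟨hx, fun y _ => by simp⟩

theorem isProj_singleton (x p : E) : IsProj {p} x p :=
  ⟨rfl, fun _ hy => by rw [hy]⟩

theorem IsProj.eq_of_mem {C : Set E} {x p : E} (h : IsProj C x p) (hx : x ∈ C) : p = x := by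
  have := h.2 x hx
  rw [sub_self, norm_zero, norm_le_zero_iff, sub_eq_zero] at this
  exact this.symm

end Projection

section Cycles

variable {E : Type*} [NormedAddCommGroup E] [NormedSpace ℝ E] {m : ℕ} [NeZero m]

def CharacterizesCycles (Φ : (Fin m → E) → ℝ) : Prop :=
  ∀ C : Fin m → Set E, (∀ i, (C i).Nonempty ∧ IsClosed (C i) ∧ Convex ℝ (C i)) →
    {y : Fin m → E | IsCycle C y} =
      {y : Fin m → E | (∀ i, y i ∈ C i) ∧ ∀ z : Fin m → E, (∀ i, z i ∈ C i) → Φ y ≤ Φ z}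

theorem CharacterizesCycles.lt_of_isCycle_of_not_isCycle {Φ : (Fin m → E) → ℝ}
    (hΦ : CharacterizesCycles Φ) {C : Fin m → Set E}
    (hC : ∀ i, (C i).Nonempty ∧ IsClosed (C i) ∧ Convex ℝ (C i)) {y a : Fin m → E}
    (hy : IsCycle C y) (ha : ∀ i, a i ∈ C i) (ha' : ¬ IsCycle C a) : Φ y < Φ a := by
  have hy_min : y ∈ {y : Fin m → E | IsCycle C y} := hy
  have ha_not_min : a ∉ {y : Fin m → E | IsCycle C y} := ha'
  rw [hΦ C hC] at hy_min ha_not_min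
  simp only [Set.mem_ofPred_eq, not_and, not_forall, not_le] at hy_min ha_not_min
  obtain ⟨z, hz, hza⟩ := ha_not_min ha
  exact (hy_min.2 z hz).trans_lt hza

def segmentFamily (a : Fin m → E) (k : Fin m) : Fin m → Set E :=
  update (fun i => {a i}) k (segment ℝ (a (k + 1)) (a k))

theorem segmentFamily_nonempty_isClosed_convex (a : Fin m → E) (k i : Fin m) :
    (segmentFamily a k i).Nonempty ∧ IsClosed (segmentFamily a k i) ∧
      Convex ℝ (segmentFamily a k i) := by
  rcases eq_or_ne i k with rfl | hik
  · simp only [segmentFamily, update_self]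
    refine ⟨⟨_, left_mem_segment ℝ _ _⟩, ?_, convex_segment _ _⟩
    rw [← convexHull_pair]
    exact ((Set.toFinite _).isCompact_convexHull ℝ).isClosed
  · simp only [segmentFamily, update_of_ne hik]
    exact ⟨Set.singleton_nonempty _, isClosed_singleton, convex_singleton _⟩

theorem mem_segmentFamily (a : Fin m → E) (k i : Fin m) : a i ∈ segmentFamily a k i := by
  rcases eq_or_ne i k with rfl | hik
  · simpa [segmentFamily] using right_mem_segment ℝ _ _
  · simp [segmentFamily, update_of_ne hik]

theorem not_isCycle_segmentFamily {a : Fin m → E} {k : Fin m} (hk : a k ≠ a (k + 1)) :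
    ¬ IsCycle (segmentFamily a k) a := fun h =>
  hk ((h k).eq_of_mem (by simpa [segmentFamily] using left_mem_segment ℝ _ _))

theorem isCycle_segmentFamily_update (hm : 2 ≤ m) (a : Fin m → E) (k : Fin m) :
    IsCycle (segmentFamily a k) (update a k (a (k + 1))) := by
  intro i
  rcases eq_or_ne i k with rfl | hik
  · rw [update_of_ne (Fin.add_one_ne_self hm i), update_self]
    exact isProj_self (by simpa [segmentFamily] using left_mem_segment ℝ _ _)
  · simpa [segmentFamily, update_of_ne hik] using isProj_singleton _ (a i)

theorem CharacterizesCycles.update_lt {Φ : (Fin m → E) → ℝ} (hΦ : CharacterizesCycles Φ)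
    (hm : 2 ≤ m) {a : Fin m → E} {k : Fin m} (hk : a k ≠ a (k + 1)) :
    Φ (update a k (a (k + 1))) < Φ a :=
  hΦ.lt_of_isCycle_of_not_isCycle (segmentFamily_nonempty_isClosed_convex a k)
    (isCycle_segmentFamily_update hm a k) (mem_segmentFamily a k) (not_isCycle_segmentFamily hk)

theorem CharacterizesCycles.single_lt_single_add_one {Φ : (Fin m → E) → ℝ}
    (hΦ : CharacterizesCycles Φ) (hm : 3 ≤ m) {x : E} (hx : x ≠ 0) (k : Fin m) :
    Φ (Pi.single k x) < Φ (Pi.single (k + 1) x) := by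
  have hk₁ : k + 1 ≠ k := Fin.add_one_ne_self (by omega) k
  have hk₂ : k + 1 + 1 ≠ k := Fin.add_one_add_one_ne_self hm k
  have hk₂' : k + 1 + 1 ≠ k + 1 := Fin.add_one_ne_self (by omega) (k + 1)
  set b : Fin m → E := update (Pi.single (k + 1) x) k x
  have hab : Φ b < Φ (Pi.single (k + 1) x) := by
    have := hΦ.update_lt (by omega) (a := Pi.single (k + 1) x) (k := k)
      (by simpa [Pi.single_apply, hk₁.symm] using hx.symm)
    simpa [Pi.single_apply] using this
  have hb : update b (k + 1) (b (k + 1 + 1)) = Pi.single k x := by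
    ext i
    rcases eq_or_ne i (k + 1) with rfl | hi
    · simp [b, hk₁, hk₂, hk₂']
    · rcases eq_or_ne i k with rfl | hi'
      · simp [b, update_of_ne hi]
      · simp [b, hi, hi']
  have hbk : b (k + 1) ≠ b (k + 1 + 1) := by
    simpa [b, Pi.single_apply, hk₁, hk₂, hk₂'] using hx
  exact (hb ▸ hΦ.update_lt (by omega) hbk).trans hab

theorem not_characterizesCycles [Nontrivial E] (hm : 3 ≤ m) (Φ : (Fin m → E) → ℝ) :
    ¬ CharacterizesCycles Φ := by
  intro hΦ
  obtain ⟨x, hx⟩ := exists_ne (0 : E)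
  obtain ⟨k, hk⟩ := Finite.exists_max fun k : Fin m => Φ (Pi.single k x)
  exact (hΦ.single_lt_single_add_one hm hx k).not_ge (hk (k + 1))

end Cycles

theorem no_variational_characterization_of_cycles_general
    {H : Type*} [NormedAddCommGroup H] [InnerProductSpace ℝ H]
    (hdim : 2 ≤ Module.rank ℝ H) (m : ℕ) [NeZero m] (hm : 3 ≤ m) :
    ¬ ∃ Φ : (Fin m → H) → ℝ,
        ∀ C : Fin m → Set H,
          (∀ i, (C i).Nonempty ∧ IsClosed (C i) ∧ Convex ℝ (C i)) →
          {y : Fin m → H | IsCycle C y} =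
            {y : Fin m → H | (∀ i, y i ∈ C i) ∧
              ∀ z : Fin m → H, (∀ i, z i ∈ C i) → Φ y ≤ Φ z} := by
  have : Nontrivial H := rank_pos_iff_nontrivial.mp (zero_lt_two.trans_le hdim)
  rintro ⟨Φ, hΦ⟩
  exact not_characterizesCycles hm Φ hΦ

theorem no_variational_characterization_of_cycles
    {H : Type*} [NormedAddCommGroup H] [InnerProductSpace ℝ H] [CompleteSpace H]
    (hdim : 2 ≤ Module.rank ℝ H) (m : ℕ) [NeZero m] (hm : 3 ≤ m) :
    ¬ ∃ Φ : (Fin m → H) → ℝ,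
        ∀ C : Fin m → Set H,
          (∀ i, (C i).Nonempty ∧ IsClosed (C i) ∧ Convex ℝ (C i)) →
          {y : Fin m → H | IsCycle C y} =
            {y : Fin m → H | (∀ i, y i ∈ C i) ∧
              ∀ z : Fin m → H, (∀ i, z i ∈ C i) → Φ y ≤ Φ z} :=
  no_variational_characterization_of_cycles_general hdim m hm
end

section
/- Let H be a real Hilbert space, m ≥ 2, C_1,…,C_m nonempty closed convex subsets of H with projections P_i, C = C_1 × ⋯ × C_m and D the diagonal in H^m. Define φ : H → ℝ by φ(y) = ∑_{i=1}^m ‖y - P_i y‖². Then a point (y,…,y) ∈ D is a fixed point of P_D ∘ P_C if and only if y is a minimizer of φ over H. -/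
/-!
Put `u = ∑ i, (y - P_i y)`, so that `y` is the mean of the `P_i y` iff `u = 0`. By the
variational inequality of the projection, `dist(·, C_i)²` lies above its tangent
`‖y - P_i y‖² + 2 ⟪y - P_i y, · - y⟫` at `y`; summing, `φ ≥ φ y + 2 ⟪u, · - y⟫`, so `u = 0`
makes `y` a minimizer. Conversely, measuring distances to the points `P_i y` from `y - u / m`
gives `φ (y - u / m) ≤ φ y - ‖u‖² / m`, which forces `u = 0` at a minimizer.
-/

open Finset Metric RealInnerProductSpace

theorem Metric.le_infDist_sq {α : Type*} [PseudoMetricSpace α] {s : Set α} {x : α} {r : ℝ}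
    (hs : s.Nonempty) (h : ∀ p ∈ s, r ≤ dist x p ^ 2) : r ≤ infDist x s ^ 2 :=
  (Real.sqrt_le_left infDist_nonneg).1 <|
    (le_infDist hs).2 fun p hp => (Real.sqrt_le_left dist_nonneg).2 (h p hp)

theorem IsProj.infDist_eq {E : Type*} [NormedAddCommGroup E] {C : Set E} {x p : E}
    (h : IsProj C x p) : infDist x C = ‖x - p‖ :=
  le_antisymm (dist_eq_norm x p ▸ infDist_le_dist_of_mem h.1)
    ((le_infDist ⟨p, h.1⟩).2 fun q hq => dist_eq_norm x q ▸ h.2 q hq)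

section InnerProductSpace

variable {E : Type*} [NormedAddCommGroup E] [InnerProductSpace ℝ E]

theorem Finset.sum_norm_sub_sq {ι : Type*} (s : Finset ι) (a : ι → E) (v : E) :
    ∑ i ∈ s, ‖a i - v‖ ^ 2 = ∑ i ∈ s, ‖a i‖ ^ 2 - 2 * ⟪∑ i ∈ s, a i, v⟫ + #s * ‖v‖ ^ 2 := by
  simp only [norm_sub_sq_real, sum_add_distrib, sum_sub_distrib, ← mul_sum, sum_inner,
    sum_const, nsmul_eq_mul]

theorem Finset.sum_norm_sub_inv_smul_sum_sq {ι : Type*} (s : Finset ι) (a : ι → E) :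
    ∑ i ∈ s, ‖a i - (#s : ℝ)⁻¹ • ∑ j ∈ s, a j‖ ^ 2
      = ∑ i ∈ s, ‖a i‖ ^ 2 - (#s : ℝ)⁻¹ * ‖∑ i ∈ s, a i‖ ^ 2 := by
  have hcard : (#s : ℝ) * (#s : ℝ)⁻¹ ^ 2 = (#s : ℝ)⁻¹ := by
    rw [sq, ← mul_assoc]; simpa using inv_mul_mul_self (#s : ℝ)⁻¹
  rw [sum_norm_sub_sq, real_inner_smul_right, real_inner_self_eq_norm_sq, norm_smul, mul_pow,
    Real.norm_eq_abs, sq_abs, ← mul_assoc (#s : ℝ), hcard]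
  ring

theorem Finset.inv_card_smul_sum_eq_iff {ι : Type*} (s : Finset ι) (hs : s.Nonempty)
    (a : ι → E) (x : E) : (#s : ℝ)⁻¹ • ∑ i ∈ s, a i = x ↔ ∑ i ∈ s, (x - a i) = 0 := by
  have hcard : (#s : ℝ) ≠ 0 := by exact_mod_cast hs.card_pos.ne'
  rw [inv_smul_eq_iff₀ hcard, sum_sub_distrib, sum_const, ← Nat.cast_smul_eq_nsmul ℝ,
    sub_eq_zero, eq_comm]

namespace IsProj

variable {C : Set E} {x p : E}

theorem inner_sub_le_zero (hC : Convex ℝ C) (h : IsProj C x p) {q : E} (hq : q ∈ C) :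
    ⟪x - p, q - p⟫ ≤ 0 := by
  refine (norm_eq_iInf_iff_real_inner_le_zero hC h.1).1 ?_ q hq
  simpa only [← dist_eq_norm, ← infDist_eq_iInf] using h.infDist_eq.symm

theorem norm_sub_sq_add_inner_le_infDist_sq (hC : Convex ℝ C) (h : IsProj C x p) (v : E) :
    ‖x - p‖ ^ 2 + 2 * ⟪x - p, v - x⟫ ≤ infDist v C ^ 2 := by
  refine le_infDist_sq ⟨p, h.1⟩ fun q hq => ?_
  have hsplit : v - q = (x - p) + ((v - x) - (q - p)) := by abel
  rw [dist_eq_norm, hsplit, norm_add_sq_real, inner_sub_right (x - p) (v - x)]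
  linarith [h.inner_sub_le_zero hC hq, sq_nonneg ‖(v - x) - (q - p)‖]

end IsProj

end InnerProductSpace

theorem diagonal_fixed_point_iff_minimizer_general
    {H : Type*} [NormedAddCommGroup H] [InnerProductSpace ℝ H]
    (m : ℕ) (hm : 2 ≤ m) (C : Fin m → Set H)
    (hconv : ∀ i, Convex ℝ (C i))
    (φ : H → ℝ) (hφ : ∀ v : H, φ v = ∑ i : Fin m, (Metric.infDist v (C i)) ^ 2)
    (y : H) (c : Fin m → H) (hc : ∀ i, IsProj (C i) y (c i)) :
    (m : ℝ)⁻¹ • ∑ i : Fin m, c i = y ↔ ∀ w : H, φ y ≤ φ w := by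
  have hcard : #(univ : Finset (Fin m)) = m := card_fin m
  have hφy : φ y = ∑ i, ‖y - c i‖ ^ 2 := by simp only [hφ, (hc _).infDist_eq]
  have hfix := inv_card_smul_sum_eq_iff univ (univ_nonempty_iff.2 ⟨⟨0, by omega⟩⟩) c y
  rw [hcard] at hfix
  rw [hfix]
  constructor
  · intro hu w
    calc φ y = ∑ i, (‖y - c i‖ ^ 2 + 2 * ⟪y - c i, w - y⟫) := by
          rw [sum_add_distrib, ← mul_sum, ← sum_inner, hu, inner_zero_left, mul_zero, add_zero, hφy]
      _ ≤ φ w := hφ w ▸ sum_le_sum fun i _ => (hc i).norm_sub_sq_add_inner_le_infDist_sq (hconv i) w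
  · intro hmin
    set u := ∑ i, (y - c i)
    have hstep : φ (y - (m : ℝ)⁻¹ • u) ≤ φ y - (m : ℝ)⁻¹ * ‖u‖ ^ 2 := by
      have hmean := sum_norm_sub_inv_smul_sum_sq univ fun i => y - c i
      rw [hcard] at hmean
      rw [hφ, hφy, ← hmean]
      gcongr with i
      · exact infDist_nonneg
      · rw [sub_right_comm, ← dist_eq_norm]
        exact infDist_le_dist_of_mem (hc i).1
    have hmpos : 0 < (m : ℝ)⁻¹ := by positivity
    have hu : ‖u‖ ^ 2 ≤ 0 := by nlinarith [hmin (y - (m : ℝ)⁻¹ • u)]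
    simpa using hu

theorem diagonal_fixed_point_iff_minimizer
    {H : Type*} [NormedAddCommGroup H] [InnerProductSpace ℝ H] [CompleteSpace H]
    (m : ℕ) (hm : 2 ≤ m) (C : Fin m → Set H)
    (hne : ∀ i, (C i).Nonempty) (hcl : ∀ i, IsClosed (C i)) (hconv : ∀ i, Convex ℝ (C i))
    (φ : H → ℝ) (hφ : ∀ v : H, φ v = ∑ i : Fin m, (Metric.infDist v (C i)) ^ 2)
    (y : H) (c : Fin m → H) (hc : ∀ i, IsProj (C i) y (c i)) :
    (m : ℝ)⁻¹ • ∑ i : Fin m, c i = y ↔ ∀ w : H, φ y ≤ φ w :=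
  diagonal_fixed_point_iff_minimizer_general m hm C hconv φ hφ y c hc
end
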